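/- arXiv:2601.02817 — 4 statements merged into one kernel-verified Lean document; each statement's English description precedes it below -/
import Mathlib

section
/- Let θ₁, θ₂ ∈ (0, π/2) and let T be a bounded linear operator on H such that for every x ∈ K: Re⟨T x, x⟩ ≥ 0, Im⟨T x, x⟩ ≤ 0, and tan(θ₁)·Re⟨T x, x⟩ ≤ −Im⟨T x, x⟩ ≤ tan(θ₂)·Re⟨T x, x⟩ (i.e., the Berezin range of T lies in {r e^{−iφ} : r ≥ 0, θ₁ ≤ φ ≤ θ₂}). Set θ = max{θ₂, π/2 − θ₁}. Then for each choice of sign ±, ber(T) ≥ (1/(2 sin θ)) · ber(Re(T) ± Im(T)) + (1/(2 sin θ)) · |ber(Re(T)) − ber(Im(T))|, where ber(Re(T) ± Im(T)) = sup_{x ∈ K} |Re⟨T x, x⟩ ± Im⟨T x, x⟩|. -/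
open scoped InnerProductSpace
open ContinuousLinearMap

noncomputable section

variable {H : Type*} [NormedAddCommGroup H] [InnerProductSpace ℂ H] [CompleteSpace H]

/-- The Berezin number of `A` relative to a set `K` of unit vectors:
`ber(A) = sup_{x ∈ K} |⟨A x, x⟩|` (with the paper's inner product `⟨A x, x⟩ = ⟪x, A x⟫_ℂ`). -/
def berNum (K : Set H) (A : H →L[ℂ] H) : ℝ :=
  ⨆ x : K, ‖⟪(x : H), A x⟫_ℂ‖

/-- The Berezin norm of `A` relative to `K`: `‖A‖_ber = sup_{x, y ∈ K} |⟨A x, y⟩|`. -/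
def berNorm (K : Set H) (A : H →L[ℂ] H) : ℝ :=
  ⨆ x : K, ⨆ y : K, ‖⟪(y : H), A (x : H)⟫_ℂ‖

/-- The real part `Re(A) = (A + A*)/2` of an operator. -/
def reOp (A : H →L[ℂ] H) : H →L[ℂ] H := (2 : ℂ)⁻¹ • (A + adjoint A)

/-- The imaginary part `Im(A) = (A - A*)/(2i)` of an operator. -/
def imOp (A : H →L[ℂ] H) : H →L[ℂ] H := (2 * Complex.I)⁻¹ • (A - adjoint A)

/-- `A` is Berezin sectorial with semi-angle `θ` relative to `K`:
every Berezin symbol value `⟨A x, x⟩`, `x ∈ K`, lies in the sector `S_θ`. -/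
def BerSectorial (K : Set H) (θ : ℝ) (A : H →L[ℂ] H) : Prop :=
  ∀ x ∈ K, 0 ≤ (⟪x, A x⟫_ℂ).re ∧ |(⟪x, A x⟫_ℂ).im| ≤ Real.tan θ * (⟪x, A x⟫_ℂ).re

/-- `A ∈ Π_θ^{Ber,P}`: Berezin sectorial and both `Re(A)` and `Im(A)` satisfy
the Berezin number power inequality. -/
def BerSectorialP (K : Set H) (θ : ℝ) (A : H →L[ℂ] H) : Prop :=
  BerSectorial K θ A ∧
    ∀ n : ℕ, 0 < n →
      berNum K (reOp A ^ n) ≤ berNum K (reOp A) ^ n ∧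
      berNum K (imOp A ^ n) ≤ berNum K (imOp A) ^ n

private lemma inner_reOp' (A : H →L[ℂ] H) (x : H) :
    ⟪x, reOp A x⟫_ℂ = ((⟪x, A x⟫_ℂ).re : ℂ) := by
  have h1 := congrArg Complex.re (inner_conj_symm x (A x))
  have h2 := congrArg Complex.im (inner_conj_symm x (A x))
  rw [Complex.conj_re] at h1
  rw [Complex.conj_im] at h2
  simp only [reOp, coe_smul', Pi.smul_apply, add_apply, inner_smul_right, inner_add_right,
    adjoint_inner_right]
  simp [Complex.ext_iff, Complex.mul_re, Complex.mul_im, ← h1, ← h2]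
  ring

private lemma inner_imOp' (A : H →L[ℂ] H) (x : H) :
    ⟪x, imOp A x⟫_ℂ = ((⟪x, A x⟫_ℂ).im : ℂ) := by
  have h1 := congrArg Complex.re (inner_conj_symm x (A x))
  have h2 := congrArg Complex.im (inner_conj_symm x (A x))
  rw [Complex.conj_re] at h1
  rw [Complex.conj_im] at h2
  simp only [imOp, coe_smul', Pi.smul_apply, sub_apply, inner_smul_right, inner_sub_right,
    adjoint_inner_right]
  simp [Complex.ext_iff, Complex.mul_re, Complex.mul_im, Complex.inv_re, Complex.inv_im,
    Complex.normSq_apply, ← h1, ← h2]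
  ring

private lemma bdd_aux (K : Set H) (hKunit : ∀ x ∈ K, ‖x‖ = 1) (A : H →L[ℂ] H) :
    BddAbove (Set.range fun x : K => ‖⟪(x : H), A x⟫_ℂ‖) := by
  refine ⟨‖A‖, ?_⟩
  rintro r ⟨x, rfl⟩
  have h1 : ‖⟪(x : H), A x⟫_ℂ‖ ≤ ‖(x : H)‖ * ‖A (x : H)‖ := norm_inner_le_norm _ _
  have h2 : ‖A (x : H)‖ ≤ ‖A‖ * ‖(x : H)‖ := A.le_opNorm _
  have h3 : ‖(x : H)‖ = 1 := hKunit x x.2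
  rw [h3, one_mul] at h1
  rw [h3, mul_one] at h2
  calc ‖⟪(x : H), A x⟫_ℂ‖ = ‖⟪(x : H), A x⟫_ℂ‖ := rfl
    _ ≤ ‖A (x : H)‖ := h1
    _ ≤ ‖A‖ := h2

private lemma key_alg (c t a s r : ℝ) (hc : 0 ≤ c) (ht : 0 ≤ t) (hpyth : t^2 + c^2 = 1)
    (ha : 0 ≤ a) (h1 : t * a ≤ c * s) (hr : r ^ 2 = a ^ 2 + s ^ 2) (hr0 : 0 ≤ r) :
    a ≤ c * r := by
  have h2 : a ^ 2 ≤ (c * r) ^ 2 := by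
    nlinarith [mul_self_le_mul_self (mul_nonneg ht ha) h1]
  have h3 := Real.sqrt_le_sqrt h2
  rwa [Real.sqrt_sq ha, Real.sqrt_sq (mul_nonneg hc hr0)] at h3

/-- If the Berezin range of `T` lies in `{r e^{−iφ} : r ≥ 0, θ₁ ≤ φ ≤ θ₂}`
with `θ₁, θ₂ ∈ (0, π/2)`, then with `θ = max{θ₂, π/2 − θ₁}`, for each sign `ε = ±1`,
`ber(T) ≥ (1/(2 sin θ)) ber(Re T ± Im T) + (1/(2 sin θ)) |ber(Re T) − ber(Im T)|`. -/
theorem berezin_range_in_lower_sector_lower_bound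
    (K : Set H) (hK : K.Nonempty) (hKunit : ∀ x ∈ K, ‖x‖ = 1)
    (θ₁ θ₂ : ℝ) (hθ₁ : θ₁ ∈ Set.Ioo 0 (Real.pi / 2)) (hθ₂ : θ₂ ∈ Set.Ioo 0 (Real.pi / 2))
    (T : H →L[ℂ] H)
    (hT : ∀ x ∈ K, 0 ≤ (⟪x, T x⟫_ℂ).re ∧ (⟪x, T x⟫_ℂ).im ≤ 0 ∧
      Real.tan θ₁ * (⟪x, T x⟫_ℂ).re ≤ -(⟪x, T x⟫_ℂ).im ∧
      -(⟪x, T x⟫_ℂ).im ≤ Real.tan θ₂ * (⟪x, T x⟫_ℂ).re)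
    (ε : ℝ) (hε : ε = 1 ∨ ε = -1) :
    (2 * Real.sin (max θ₂ (Real.pi / 2 - θ₁)))⁻¹ *
        (⨆ x : K, |(⟪(x : H), T x⟫_ℂ).re + ε * (⟪(x : H), T x⟫_ℂ).im|)
      + (2 * Real.sin (max θ₂ (Real.pi / 2 - θ₁)))⁻¹ *
        |berNum K (reOp T) - berNum K (imOp T)|
      ≤ berNum K T := by
  obtain ⟨hθ₁0, hθ₁π⟩ := hθ₁
  obtain ⟨hθ₂0, hθ₂π⟩ := hθ₂
  have : Nonempty K := hK.to_subtype
  set θ := max θ₂ (Real.pi / 2 - θ₁) with hθdef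
  have hθlt : θ < Real.pi / 2 := max_lt hθ₂π (by linarith)
  have hθ0 : 0 < θ := lt_of_lt_of_le hθ₂0 (le_max_left _ _)
  have hπ := Real.pi_pos
  have hsinθ : 0 < Real.sin θ := Real.sin_pos_of_pos_of_lt_pi hθ0 (by linarith)
  -- sin monotone comparisons
  have hmono : ∀ u : ℝ, 0 ≤ u → u ≤ θ → Real.sin u ≤ Real.sin θ := by
    intro u hu0 huθ
    exact Real.strictMonoOn_sin.monotoneOn ⟨by linarith, by linarith⟩
      ⟨by linarith, hθlt.le⟩ huθ
  have hcos1 : Real.cos θ₁ ≤ Real.sin θ := by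
    have := hmono (Real.pi / 2 - θ₁) (by linarith) (le_max_right _ _)
    rwa [Real.sin_pi_div_two_sub] at this
  have hsin2 : Real.sin θ₂ ≤ Real.sin θ := hmono θ₂ hθ₂0.le (le_max_left _ _)
  have hcosθ₁ : 0 < Real.cos θ₁ := Real.cos_pos_of_mem_Ioo ⟨by linarith, by linarith⟩
  have hcosθ₂ : 0 < Real.cos θ₂ := Real.cos_pos_of_mem_Ioo ⟨by linarith, by linarith⟩
  have hsinθ₁ : 0 ≤ Real.sin θ₁ := Real.sin_nonneg_of_nonneg_of_le_pi hθ₁0.le (by linarith)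
  have hcosθ₂' : 0 ≤ Real.cos θ₂ := hcosθ₂.le
  have hsinθ₂ : 0 ≤ Real.sin θ₂ := Real.sin_nonneg_of_nonneg_of_le_pi hθ₂0.le (by linarith)
  -- notation
  set berT := berNum K T with hberT
  have hbddT := bdd_aux K hKunit T
  have hbddR := bdd_aux K hKunit (reOp T)
  have hbddI := bdd_aux K hKunit (imOp T)
  -- pointwise bounds: for x ∈ K, re ≤ sin θ * ber T and -im ≤ sin θ * ber T
  have hpt : ∀ x : K, (⟪(x : H), T x⟫_ℂ).re ≤ Real.sin θ * berT ∧
      -(⟪(x : H), T x⟫_ℂ).im ≤ Real.sin θ * berT := by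
    intro x
    obtain ⟨ha, hb, h1, h2⟩ := hT x x.2
    set a := (⟪(x : H), T x⟫_ℂ).re
    set s := -(⟪(x : H), T x⟫_ℂ).im with hs
    have hs0 : 0 ≤ s := by simp [hs]; linarith
    set r := ‖⟪(x : H), T x⟫_ℂ‖ with hrdef
    have hr0 : 0 ≤ r := norm_nonneg _
    have hr2 : r ^ 2 = a ^ 2 + s ^ 2 := by
      rw [hrdef, Complex.sq_norm, Complex.normSq_apply]
      simp [hs]; ring
    have hrT : r ≤ berT := le_ciSup hbddT x
    have h1' : Real.sin θ₁ * a ≤ Real.cos θ₁ * s := by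
      rw [Real.tan_eq_sin_div_cos] at h1
      rw [div_mul_eq_mul_div, div_le_iff₀ hcosθ₁] at h1
      linarith [h1]
    have h2' : Real.cos θ₂ * s ≤ Real.sin θ₂ * a := by
      rw [Real.tan_eq_sin_div_cos] at h2
      rw [div_mul_eq_mul_div, le_div_iff₀ hcosθ₂] at h2
      linarith [h2]
    constructor
    · have := key_alg (Real.cos θ₁) (Real.sin θ₁) a s r hcosθ₁.le hsinθ₁
        (Real.sin_sq_add_cos_sq θ₁) ha h1' hr2 hr0
      calc a ≤ Real.cos θ₁ * r := this
        _ ≤ Real.sin θ * r := mul_le_mul_of_nonneg_right hcos1 hr0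
        _ ≤ Real.sin θ * berT := mul_le_mul_of_nonneg_left hrT hsinθ.le
    · have := key_alg (Real.sin θ₂) (Real.cos θ₂) s a r hsinθ₂ hcosθ₂'
        (by rw [add_comm]; exact Real.sin_sq_add_cos_sq θ₂) hs0 h2' (by rw [hr2]; ring) hr0
      calc s ≤ Real.sin θ₂ * r := this
        _ ≤ Real.sin θ * r := mul_le_mul_of_nonneg_right hsin2 hr0
        _ ≤ Real.sin θ * berT := mul_le_mul_of_nonneg_left hrT hsinθ.le
  -- identify the summands of berNum (reOp T) and berNum (imOp T)
  have hreval : ∀ x : K, ‖⟪(x : H), reOp T x⟫_ℂ‖ = (⟪(x : H), T x⟫_ℂ).re := by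
    intro x
    rw [inner_reOp', Complex.norm_real, Real.norm_eq_abs, abs_of_nonneg (hT x x.2).1]
  have himval : ∀ x : K, ‖⟪(x : H), imOp T x⟫_ℂ‖ = -(⟪(x : H), T x⟫_ℂ).im := by
    intro x
    rw [inner_imOp', Complex.norm_real, Real.norm_eq_abs, abs_of_nonpos (hT x x.2).2.1]
  set A := berNum K (reOp T) with hA
  set B := berNum K (imOp T) with hB
  have hAle : A ≤ Real.sin θ * berT := by
    refine ciSup_le fun x => ?_
    rw [hreval x]; exact (hpt x).1
  have hBle : B ≤ Real.sin θ * berT := by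
    refine ciSup_le fun x => ?_
    rw [himval x]; exact (hpt x).2
  have haA : ∀ x : K, (⟪(x : H), T x⟫_ℂ).re ≤ A := fun x => by
    rw [← hreval x]; exact le_ciSup hbddR x
  have hsB : ∀ x : K, -(⟪(x : H), T x⟫_ℂ).im ≤ B := fun x => by
    rw [← himval x]; exact le_ciSup hbddI x
  -- the sup in the statement
  have hS : (⨆ x : K, |(⟪(x : H), T x⟫_ℂ).re + ε * (⟪(x : H), T x⟫_ℂ).im|) ≤ A + B := by
    refine ciSup_le fun x => ?_
    obtain ⟨ha, hb, -, -⟩ := hT x x.2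
    have h1 := haA x
    have h2 := hsB x
    rcases hε with rfl | rfl
    · rw [abs_le]; constructor <;> [skip; skip] <;> nlinarith [abs_nonneg (⟪(x : H), T x⟫_ℂ).im]
    · rw [abs_le]; constructor <;> nlinarith []
  -- conclude
  have hmax : A + B + |A - B| ≤ 2 * (Real.sin θ * berT) := by
    rcases abs_cases (A - B) with ⟨h, -⟩ | ⟨h, -⟩ <;> rw [h] <;> linarith
  have hfinal : (⨆ x : K, |(⟪(x : H), T x⟫_ℂ).re + ε * (⟪(x : H), T x⟫_ℂ).im|) + |A - B|
      ≤ 2 * Real.sin θ * berT := by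
    calc _ ≤ (A + B) + |A - B| := add_le_add_left hS _
      _ ≤ 2 * (Real.sin θ * berT) := hmax
      _ = 2 * Real.sin θ * berT := by ring
  have h2s : 0 < 2 * Real.sin θ := by linarith
  rw [← mul_add]
  rw [inv_mul_le_iff₀ h2s]
  calc (⨆ x : K, |(⟪(x : H), T x⟫_ℂ).re + ε * (⟪(x : H), T x⟫_ℂ).im|) + |A - B|
      ≤ 2 * Real.sin θ * berT := hfinal
    _ = 2 * Real.sin θ * berT := rfl
end
end

section
/- Let θ ∈ (0, π/2), let S, T be bounded linear operators on H such that T*S is Berezin sectorial with semi-angle θ relative to K, and let α > 0 be a real number. Then ber(T*S) ≥ max{β₁, β₂}, where β₁ = (1/(2α sin θ)) · (‖(S + iαT)*(S + iαT)‖_ber − ‖S*S + α²·T*T‖_ber) and β₂ = (1/(2α sin θ)) · (‖S*S + α²·T*T‖_ber − ‖(S − iαT)*(S − iαT)‖_ber). -/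
open scoped InnerProductSpace
open ContinuousLinearMap

noncomputable section

variable {H : Type*} [NormedAddCommGroup H] [InnerProductSpace ℂ H] [CompleteSpace H]

/- ## Auxiliary lemmas -/

private lemma coe_bridge_aux : ∀ r : ℝ, (RCLike.ofReal r : ℂ) = (r : ℂ) := fun _ => rfl

private lemma abs_inner_le_opNorm_aux (A : H →L[ℂ] H) {x y : H} (hx : ‖x‖ = 1) (hy : ‖y‖ = 1) :
    ‖⟪y, A x⟫_ℂ‖ ≤ ‖A‖ := by
  have h1 : ‖⟪y, A x⟫_ℂ‖ ≤ ‖y‖ * ‖A x‖ := norm_inner_le_norm (𝕜 := ℂ) _ _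
  have h2 : ‖A x‖ ≤ ‖A‖ * ‖x‖ := A.le_opNorm x
  rw [hy] at h1
  rw [hx] at h2
  linarith

private lemma le_berNum_aux (K : Set H) (hKunit : ∀ x ∈ K, ‖x‖ = 1) (A : H →L[ℂ] H)
    {x : H} (hx : x ∈ K) : ‖⟪x, A x⟫_ℂ‖ ≤ berNum K A := by
  haveI : Nonempty K := ⟨⟨x, hx⟩⟩
  have hbdd : BddAbove (Set.range fun z : K => ‖⟪(z : H), A z⟫_ℂ‖) := by
    refine ⟨‖A‖, ?_⟩
    rintro r ⟨z, rfl⟩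
    exact abs_inner_le_opNorm_aux A (hKunit z z.2) (hKunit z z.2)
  exact le_ciSup_of_le hbdd ⟨x, hx⟩ le_rfl

private lemma le_berNorm_aux (K : Set H) (hKunit : ∀ x ∈ K, ‖x‖ = 1) (A : H →L[ℂ] H)
    {x y : H} (hx : x ∈ K) (hy : y ∈ K) :
    ‖⟪y, A x⟫_ℂ‖ ≤ berNorm K A := by
  haveI : Nonempty K := ⟨⟨x, hx⟩⟩
  have hbdd : ∀ u : K, BddAbove (Set.range fun v : K => ‖⟪(v : H), A (u : H)⟫_ℂ‖) := by
    intro u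
    refine ⟨‖A‖, ?_⟩
    rintro r ⟨v, rfl⟩
    exact abs_inner_le_opNorm_aux A (hKunit u u.2) (hKunit v v.2)
  have houter : BddAbove (Set.range fun u : K => ⨆ v : K, ‖⟪(v : H), A (u : H)⟫_ℂ‖) := by
    refine ⟨‖A‖, ?_⟩
    rintro r ⟨u, rfl⟩
    exact ciSup_le fun v => abs_inner_le_opNorm_aux A (hKunit u u.2) (hKunit v v.2)
  exact le_ciSup_of_le houter ⟨x, hx⟩ (le_ciSup_of_le (hbdd ⟨x, hx⟩) ⟨y, hy⟩ le_rfl)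

private lemma berNorm_le_aux (K : Set H) (hK : K.Nonempty) (A : H →L[ℂ] H) (M : ℝ)
    (h : ∀ x ∈ K, ∀ y ∈ K, ‖⟪y, A x⟫_ℂ‖ ≤ M) : berNorm K A ≤ M := by
  haveI : Nonempty K := hK.to_subtype
  exact ciSup_le fun x => ciSup_le fun y => h x x.2 y y.2

private lemma sector_im_le {θ : ℝ} (hθ : θ ∈ Set.Ioo 0 (Real.pi / 2)) {z : ℂ}
    (h1 : 0 ≤ z.re) (h2 : |z.im| ≤ Real.tan θ * z.re) :
    |z.im| ≤ Real.sin θ * ‖z‖ := by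
  have hc : 0 < Real.cos θ :=
    Real.cos_pos_of_mem_Ioo ⟨by linarith [hθ.1, Real.pi_pos], hθ.2⟩
  have hs : 0 < Real.sin θ :=
    Real.sin_pos_of_pos_of_lt_pi hθ.1 (by linarith [hθ.2, Real.pi_pos])
  rw [Real.tan_eq_sin_div_cos, div_mul_eq_mul_div, le_div_iff₀ hc] at h2
  have hzabs : 0 ≤ ‖z‖ := norm_nonneg z
  have hsq : ‖z‖ ^ 2 = z.re ^ 2 + z.im ^ 2 := by
    rw [Complex.sq_norm, Complex.normSq_apply]; ring
  have hpy : Real.sin θ ^ 2 + Real.cos θ ^ 2 = 1 := Real.sin_sq_add_cos_sq θ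
  have key : |z.im| ^ 2 ≤ (Real.sin θ * ‖z‖) ^ 2 := by
    have h4 : (|z.im| * Real.cos θ) ^ 2 ≤ (Real.sin θ * z.re) ^ 2 := by
      have h5 : 0 ≤ |z.im| * Real.cos θ := mul_nonneg (abs_nonneg _) hc.le
      nlinarith
    nlinarith [sq_abs z.im]
  exact le_of_pow_le_pow_left₀ two_ne_zero (mul_nonneg hs.le hzabs) key

/-- If `T*S` is Berezin sectorial with semi-angle `θ ∈ (0, π/2)` relative to
`K` and `α > 0`, then `ber(T*S) ≥ max{β₁, β₂}` with
`β₁ = (1/(2α sin θ)) (‖|S + iαT|²‖_ber − ‖S*S + α² T*T‖_ber)` and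
`β₂ = (1/(2α sin θ)) (‖S*S + α² T*T‖_ber − ‖|S − iαT|²‖_ber)`. -/
theorem berezin_sectorial_product_lower_bound
    (K : Set H) (hK : K.Nonempty) (hKunit : ∀ x ∈ K, ‖x‖ = 1)
    (θ : ℝ) (hθ : θ ∈ Set.Ioo 0 (Real.pi / 2))
    (S T : H →L[ℂ] H) (α : ℝ) (hα : 0 < α)
    (hTS : BerSectorial K θ (adjoint T * S)) :
    max ((2 * α * Real.sin θ)⁻¹ *
          (berNorm K (adjoint (S + (Complex.I * α) • T) * (S + (Complex.I * α) • T))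
            - berNorm K (adjoint S * S + ((α : ℂ) ^ 2) • (adjoint T * T))))
        ((2 * α * Real.sin θ)⁻¹ *
          (berNorm K (adjoint S * S + ((α : ℂ) ^ 2) • (adjoint T * T))
            - berNorm K (adjoint (S - (Complex.I * α) • T) * (S - (Complex.I * α) • T))))
      ≤ berNum K (adjoint T * S) := by
  obtain ⟨x₀, hx₀⟩ := hK
  have hs : 0 < Real.sin θ :=
    Real.sin_pos_of_pos_of_lt_pi hθ.1 (by linarith [hθ.2, Real.pi_pos])
  have hc : 0 < 2 * α * Real.sin θ := by positivity
  set Q : H →L[ℂ] H := adjoint S * S + ((α : ℂ) ^ 2) • (adjoint T * T) with hQdef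
  set Ap : H →L[ℂ] H := S + (Complex.I * α) • T with hApdef
  set Am : H →L[ℂ] H := S - (Complex.I * α) • T with hAmdef
  set d : ℝ := berNum K (adjoint T * S) with hddef
  -- basic expansions
  have hz : ∀ x : H, ⟪x, (adjoint T * S) x⟫_ℂ = ⟪T x, S x⟫_ℂ := fun x => by
    rw [mul_apply_eq_comp]; exact adjoint_inner_right T x (S x)
  have hQapp : ∀ x y : H, ⟪y, Q x⟫_ℂ = ⟪S y, S x⟫_ℂ + (α : ℂ) ^ 2 * ⟪T y, T x⟫_ℂ := by
    intro x y
    simp only [hQdef, ContinuousLinearMap.add_apply, ContinuousLinearMap.smul_apply,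
      mul_apply_eq_comp, inner_add_right, inner_smul_right, adjoint_inner_right]
  have hQxx : ∀ x : H, ⟪x, Q x⟫_ℂ = ((‖S x‖ ^ 2 + α ^ 2 * ‖T x‖ ^ 2 : ℝ) : ℂ) := by
    intro x
    rw [hQapp x x, inner_self_eq_norm_sq_to_K, inner_self_eq_norm_sq_to_K,
      coe_bridge_aux, coe_bridge_aux]
    push_cast
    ring
  -- the cross term
  have hcross : ∀ x : H,
      (⟪S x, (Complex.I * (α : ℂ)) • T x⟫_ℂ).re = α * (⟪x, (adjoint T * S) x⟫_ℂ).im := by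
    intro x
    rw [inner_smul_right, hz, ← inner_conj_symm (T x) (S x)]
    simp only [Complex.mul_re, Complex.mul_im, Complex.I_re, Complex.I_im,
      Complex.ofReal_re, Complex.ofReal_im, Complex.conj_re, Complex.conj_im]
    ring
  have hsmulnorm : ∀ x : H, ‖(Complex.I * (α : ℂ)) • T x‖ ^ 2 = α ^ 2 * ‖T x‖ ^ 2 := by
    intro x
    rw [norm_smul]
    have h : ‖Complex.I * (α : ℂ)‖ = |α| := by
      rw [norm_mul, Complex.norm_I, Complex.norm_real, Real.norm_eq_abs, one_mul]
    rw [h, mul_pow, sq_abs]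
  have hApx : ∀ x : H, ‖Ap x‖ ^ 2
      = ‖S x‖ ^ 2 + α ^ 2 * ‖T x‖ ^ 2 + 2 * α * (⟪x, (adjoint T * S) x⟫_ℂ).im := by
    intro x
    have h1 : Ap x = S x + (Complex.I * (α : ℂ)) • T x := by
      rw [hApdef]; rfl
    have h2 := norm_add_sq (𝕜 := ℂ) (S x) ((Complex.I * (α : ℂ)) • T x)
    simp only [RCLike.re_to_complex] at h2
    rw [h1, h2, hsmulnorm x, hcross x]
    ring
  have hAmx : ∀ x : H, ‖Am x‖ ^ 2
      = ‖S x‖ ^ 2 + α ^ 2 * ‖T x‖ ^ 2 - 2 * α * (⟪x, (adjoint T * S) x⟫_ℂ).im := by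
    intro x
    have h1 : Am x = S x - (Complex.I * (α : ℂ)) • T x := by
      rw [hAmdef]; rfl
    have h2 := norm_sub_sq (𝕜 := ℂ) (S x) ((Complex.I * (α : ℂ)) • T x)
    simp only [RCLike.re_to_complex] at h2
    rw [h1, h2, hsmulnorm x, hcross x]
    ring
  -- per-point sectorial bound on the imaginary part
  have himb : ∀ x ∈ K, 2 * α * |(⟪x, (adjoint T * S) x⟫_ℂ).im| ≤ 2 * α * Real.sin θ * d := by
    intro x hx
    obtain ⟨h1, h2⟩ := hTS x hx
    have h3 : |(⟪x, (adjoint T * S) x⟫_ℂ).im|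
        ≤ Real.sin θ * ‖⟪x, (adjoint T * S) x⟫_ℂ‖ := sector_im_le hθ h1 h2
    have h4 : ‖⟪x, (adjoint T * S) x⟫_ℂ‖ ≤ d := le_berNum_aux K hKunit _ hx
    nlinarith [norm_nonneg ⟪x, (adjoint T * S) x⟫_ℂ]
  have habsb : ∀ x : H, 2 * α * (⟪x, (adjoint T * S) x⟫_ℂ).im
      ≤ 2 * α * |(⟪x, (adjoint T * S) x⟫_ℂ).im| :=
    fun x => mul_le_mul_of_nonneg_left (le_abs_self _) (by positivity)
  -- key pointwise bound 1
  have key1 : ∀ x ∈ K, ‖Ap x‖ ^ 2 ≤ berNorm K Q + 2 * α * Real.sin θ * d := by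
    intro x hx
    have hQb : ‖S x‖ ^ 2 + α ^ 2 * ‖T x‖ ^ 2 ≤ berNorm K Q := by
      have h5 : ‖⟪x, Q x⟫_ℂ‖ = ‖S x‖ ^ 2 + α ^ 2 * ‖T x‖ ^ 2 := by
        rw [hQxx, Complex.norm_real, Real.norm_eq_abs, abs_of_nonneg (by positivity)]
      have h6 := le_berNorm_aux K hKunit Q hx hx
      linarith
    rw [hApx x]
    linarith [himb x hx, habsb x]
  -- key pointwise bound 2
  have key2 : ∀ x ∈ K, ‖S x‖ ^ 2 + α ^ 2 * ‖T x‖ ^ 2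
      ≤ berNorm K (adjoint Am * Am) + 2 * α * Real.sin θ * d := by
    intro x hx
    have hAmb : ‖Am x‖ ^ 2 ≤ berNorm K (adjoint Am * Am) := by
      have h5 : ‖⟪x, (adjoint Am * Am) x⟫_ℂ‖ = ‖Am x‖ ^ 2 := by
        rw [mul_apply_eq_comp, adjoint_inner_right,
          inner_self_eq_norm_sq_to_K, norm_pow, RCLike.norm_ofReal, abs_norm]
      have h6 := le_berNorm_aux K hKunit (adjoint Am * Am) hx hx
      linarith
    have h8 := hAmx x
    linarith [himb x hx, habsb x]
  -- bound 1 : ‖ |Ap|² ‖_ber ≤ ‖Q‖_ber + 2 α sin θ · d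
  have bound1 : berNorm K (adjoint Ap * Ap) ≤ berNorm K Q + 2 * α * Real.sin θ * d := by
    refine berNorm_le_aux K ⟨x₀, hx₀⟩ _ _ ?_
    intro x hx y hy
    have h1 : ⟪y, (adjoint Ap * Ap) x⟫_ℂ = ⟪Ap y, Ap x⟫_ℂ := by
      rw [mul_apply_eq_comp]; exact adjoint_inner_right Ap y (Ap x)
    have h2 : ‖⟪Ap y, Ap x⟫_ℂ‖ ≤ ‖Ap y‖ * ‖Ap x‖ := by
      exact norm_inner_le_norm (𝕜 := ℂ) _ _
    rw [h1]
    have h3 := key1 x hx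
    have h4 := key1 y hy
    linarith [sq_nonneg (‖Ap x‖ - ‖Ap y‖)]
  -- bound 2 : ‖Q‖_ber ≤ ‖ |Am|² ‖_ber + 2 α sin θ · d
  have bound2 : berNorm K Q ≤ berNorm K (adjoint Am * Am) + 2 * α * Real.sin θ * d := by
    refine berNorm_le_aux K ⟨x₀, hx₀⟩ _ _ ?_
    intro x hx y hy
    have h1 : ‖⟪y, Q x⟫_ℂ‖ ≤ ‖S y‖ * ‖S x‖ + α ^ 2 * (‖T y‖ * ‖T x‖) := by
      rw [hQapp]
      have ha : ‖⟪S y, S x⟫_ℂ‖ ≤ ‖S y‖ * ‖S x‖ := by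
        exact norm_inner_le_norm (𝕜 := ℂ) _ _
      have hb : ‖⟪T y, T x⟫_ℂ‖ ≤ ‖T y‖ * ‖T x‖ := by
        exact norm_inner_le_norm (𝕜 := ℂ) _ _
      have hco : ‖(α : ℂ) ^ 2 * ⟪T y, T x⟫_ℂ‖
          = α ^ 2 * ‖⟪T y, T x⟫_ℂ‖ := by
        rw [norm_mul, norm_pow, Complex.norm_real, Real.norm_eq_abs, sq_abs]
      calc ‖⟪S y, S x⟫_ℂ + (α : ℂ) ^ 2 * ⟪T y, T x⟫_ℂ‖
          ≤ ‖⟪S y, S x⟫_ℂ‖ + ‖(α : ℂ) ^ 2 * ⟪T y, T x⟫_ℂ‖ :=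
            norm_add_le _ _
        _ = ‖⟪S y, S x⟫_ℂ‖ + α ^ 2 * ‖⟪T y, T x⟫_ℂ‖ := by rw [hco]
        _ ≤ ‖S y‖ * ‖S x‖ + α ^ 2 * (‖T y‖ * ‖T x‖) := by
            nlinarith [sq_nonneg α]
    have h3 := key2 x hx
    have h4 := key2 y hy
    nlinarith [sq_nonneg (‖S x‖ - ‖S y‖),
      mul_nonneg (sq_nonneg α) (sq_nonneg (‖T x‖ - ‖T y‖))]
  rw [max_le_iff]
  constructor <;> rw [inv_mul_le_iff₀ hc]
  · linarith [bound1]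
  · linarith [bound2]

end
end

section
/- Let θ ∈ [0, π/2), let T be a bounded linear operator on H, and let S be a boundedly invertible bounded linear operator on H (i.e., S has a bounded inverse S⁻¹). Suppose S*T is Berezin sectorial with semi-angle θ relative to K. Then (‖T*T‖_ber)^{1/2} ≤ ‖S⁻¹‖ · ( sin(θ)·ber(S*T) + (1/2)·‖(T − iS)*(T − iS)‖_ber ). -/
open scoped InnerProductSpace
open ContinuousLinearMap

noncomputable section

variable {H : Type*} [NormedAddCommGroup H] [InnerProductSpace ℂ H] [CompleteSpace H]

/-- If `S` is boundedly invertible (with bounded inverse `Sinv`) and `S*T`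
is Berezin sectorial with semi-angle `θ ∈ [0, π/2)` relative to `K`, then
`(‖T*T‖_ber)^{1/2} ≤ ‖S⁻¹‖ (sin θ · ber(S*T) + (1/2) ‖|T − iS|²‖_ber)`. -/
theorem berezin_sectorial_invertible_upper_bound
    (K : Set H) (hK : K.Nonempty) (hKunit : ∀ x ∈ K, ‖x‖ = 1)
    (θ : ℝ) (hθ : θ ∈ Set.Ico 0 (Real.pi / 2))
    (T S Sinv : H →L[ℂ] H) (hS1 : S * Sinv = 1) (hS2 : Sinv * S = 1)
    (hST : BerSectorial K θ (adjoint S * T)) :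
    Real.sqrt (berNorm K (adjoint T * T)) ≤
      ‖Sinv‖ * (Real.sin θ * berNum K (adjoint S * T)
        + (1 / 2) * berNorm K (adjoint (T - Complex.I • S) * (T - Complex.I • S))) := by
  obtain ⟨hθ0, hθ2⟩ := hθ
  have hpi := Real.pi_pos
  have hsin : 0 ≤ Real.sin θ := Real.sin_nonneg_of_nonneg_of_le_pi hθ0 (by linarith)
  have hcos : 0 < Real.cos θ := Real.cos_pos_of_mem_Ioo ⟨by linarith, hθ2⟩
  have hne : Nonempty K := hK.to_subtype
  set A := adjoint S * T with hA
  set C := T - Complex.I • S with hC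
  set B := adjoint C * C with hB
  set R := ‖Sinv‖ * (Real.sin θ * berNum K A + (1 / 2) * berNorm K B) with hR
  -- boundedness of the Berezin families
  have hbd : ∀ (D : H →L[ℂ] H) (x y : K), ‖⟪(y : H), D x⟫_ℂ‖ ≤ ‖D‖ := by
    intro D x y
    have hx1 : ‖(x : H)‖ = 1 := hKunit x x.2
    have hy1 : ‖(y : H)‖ = 1 := hKunit y y.2
    calc ‖⟪(y : H), D x⟫_ℂ‖ ≤ ‖(y : H)‖ * ‖D x‖ := by
          exact norm_inner_le_norm _ _
      _ ≤ 1 * (‖D‖ * ‖(x : H)‖) := by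
          rw [hy1]; exact mul_le_mul_of_nonneg_left (D.le_opNorm x) zero_le_one
      _ = ‖D‖ := by rw [hx1]; ring
  have hbdNum : ∀ D : H →L[ℂ] H,
      BddAbove (Set.range fun x : K => ‖⟪(x : H), D x⟫_ℂ‖) := by
    intro D; exact ⟨‖D‖, by rintro _ ⟨x, rfl⟩; exact hbd D x x⟩
  have hbdInner : ∀ (D : H →L[ℂ] H) (x : K),
      BddAbove (Set.range fun y : K => ‖⟪(y : H), D x⟫_ℂ‖) := by
    intro D x; exact ⟨‖D‖, by rintro _ ⟨y, rfl⟩; exact hbd D x y⟩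
  have hbdOuter : ∀ D : H →L[ℂ] H,
      BddAbove (Set.range fun x : K => ⨆ y : K, ‖⟪(y : H), D x⟫_ℂ‖) := by
    intro D; exact ⟨‖D‖, by rintro _ ⟨x, rfl⟩; exact ciSup_le fun y => hbd D x y⟩
  have hberNorm : ∀ (D : H →L[ℂ] H) (x y : K),
      ‖⟪(y : H), D x⟫_ℂ‖ ≤ berNorm K D := by
    intro D x y
    calc ‖⟪(y : H), D x⟫_ℂ‖ ≤ ⨆ y' : K, ‖⟪(y' : H), D x⟫_ℂ‖ :=
          le_ciSup (hbdInner D x) y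
      _ ≤ berNorm K D := le_ciSup (hbdOuter D) x
  -- key pointwise bound
  have key : ∀ x : K, ‖T x‖ ≤ R := by
    intro x
    set a := ⟪(x : H), A (x : H)⟫_ℂ with ha
    obtain ⟨hre, him⟩ := hST x x.2
    -- Im a ≤ sin θ * |a|
    have hima : a.im ≤ Real.sin θ * ‖a‖ := by
      rcases le_or_gt a.im 0 with h | h
      · exact h.trans (mul_nonneg hsin (norm_nonneg a))
      · have h1 : a.im * Real.cos θ ≤ Real.sin θ * a.re := by
          rw [abs_le] at him
          have h2 := him.2
          rw [Real.tan_eq_sin_div_cos] at h2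
          have := mul_le_mul_of_nonneg_right h2 hcos.le
          calc a.im * Real.cos θ ≤ Real.sin θ / Real.cos θ * a.re * Real.cos θ := this
            _ = Real.sin θ * a.re := by field_simp
        have h1' : (a.im * Real.cos θ) * (a.im * Real.cos θ) ≤
            (Real.sin θ * a.re) * (Real.sin θ * a.re) :=
          mul_self_le_mul_self (mul_nonneg h.le hcos.le) h1
        have hsq : ‖a‖ ^ 2 = a.re ^ 2 + a.im ^ 2 := by
          rw [Complex.sq_norm, Complex.normSq_apply]; ring
        have h2 : a.im ^ 2 ≤ (Real.sin θ) ^ 2 * ‖a‖ ^ 2 := by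
          nlinarith [Real.sin_sq_add_cos_sq θ]
        nlinarith [mul_nonneg hsin (norm_nonneg a), norm_nonneg a]
    have habs : ‖a‖ ≤ berNum K A := le_ciSup (hbdNum A) x
    -- a = ⟪S x, T x⟫
    have haST : a = ⟪S (x : H), T (x : H)⟫_ℂ := by
      rw [ha, hA]
      simp [ContinuousLinearMap.mul_apply, ContinuousLinearMap.adjoint_inner_right]
    -- norm identity
    have hCx : C (x : H) = T (x : H) - Complex.I • S (x : H) := by
      rw [hC]; simp
    have hQre : (⟪(x : H), B (x : H)⟫_ℂ).re
        = ‖T (x : H)‖ ^ 2 + ‖S (x : H)‖ ^ 2 - 2 * a.im := by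
      have hBx : ⟪(x : H), B (x : H)⟫_ℂ = ⟪C (x : H), C (x : H)⟫_ℂ := by
        rw [hB]
        simp [ContinuousLinearMap.mul_apply, ContinuousLinearMap.adjoint_inner_right]
      have hnorm : ‖C (x : H)‖ ^ 2
          = ‖T (x : H)‖ ^ 2 - 2 * Complex.re ⟪T (x : H), Complex.I • S (x : H)⟫_ℂ
            + ‖Complex.I • S (x : H)‖ ^ 2 := by
        rw [hCx]; exact norm_sub_sq (𝕜 := ℂ) _ _
      have hIsmul : Complex.re ⟪T (x : H), Complex.I • S (x : H)⟫_ℂ = a.im := by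
        rw [inner_smul_right]
        have : ⟪T (x : H), S (x : H)⟫_ℂ = starRingEnd ℂ a := by
          rw [haST, ← inner_conj_symm]
        rw [this]
        simp [Complex.mul_re]
      have hIS : ‖Complex.I • S (x : H)‖ = ‖S (x : H)‖ := by
        rw [norm_smul]; simp
      have hself : (⟪C (x : H), C (x : H)⟫_ℂ).re = ‖C (x : H)‖ ^ 2 :=
        inner_self_eq_norm_sq (𝕜 := ℂ) _
      rw [hBx, hself, hnorm, hIsmul, hIS]; ring
    have hQle : (⟪(x : H), B (x : H)⟫_ℂ).re ≤ berNorm K B := by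
      calc (⟪(x : H), B (x : H)⟫_ℂ).re ≤ ‖⟪(x : H), B (x : H)⟫_ℂ‖ :=
            Complex.re_le_norm _
        _ ≤ berNorm K B := hberNorm B x x
    -- 1 ≤ ‖Sinv‖ * ‖S x‖
    have hSx : 1 ≤ ‖Sinv‖ * ‖S (x : H)‖ := by
      have hx1 : ‖(x : H)‖ = 1 := hKunit x x.2
      have : (x : H) = Sinv (S (x : H)) := by
        have := congrArg (fun f => f (x : H)) hS2
        simpa [ContinuousLinearMap.mul_apply] using this.symm
      calc (1 : ℝ) = ‖(x : H)‖ := hx1.symm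
        _ = ‖Sinv (S (x : H))‖ := by rw [← this]
        _ ≤ ‖Sinv‖ * ‖S (x : H)‖ := Sinv.le_opNorm _
    have hsum : ‖T (x : H)‖ ^ 2 + ‖S (x : H)‖ ^ 2
        ≤ berNorm K B + 2 * (Real.sin θ * berNum K A) := by
      have : ‖T (x : H)‖ ^ 2 + ‖S (x : H)‖ ^ 2
          = (⟪(x : H), B (x : H)⟫_ℂ).re + 2 * a.im := by rw [hQre]; ring
      rw [this]
      have : a.im ≤ Real.sin θ * berNum K A :=
        hima.trans (mul_le_mul_of_nonneg_left habs hsin)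
      linarith
    have hamgm : 2 * (‖T (x : H)‖ * ‖S (x : H)‖) ≤ ‖T (x : H)‖ ^ 2 + ‖S (x : H)‖ ^ 2 := by
      nlinarith [sq_nonneg (‖T (x : H)‖ - ‖S (x : H)‖)]
    calc ‖T (x : H)‖ = ‖T (x : H)‖ * 1 := by ring
      _ ≤ ‖T (x : H)‖ * (‖Sinv‖ * ‖S (x : H)‖) :=
          mul_le_mul_of_nonneg_left hSx (norm_nonneg _)
      _ = ‖Sinv‖ * (‖T (x : H)‖ * ‖S (x : H)‖) := by ring
      _ ≤ ‖Sinv‖ * ((berNorm K B + 2 * (Real.sin θ * berNum K A)) / 2) := by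
          apply mul_le_mul_of_nonneg_left _ (norm_nonneg Sinv)
          linarith
      _ = R := by rw [hR]; ring
  have hR0 : 0 ≤ R := by
    obtain ⟨x0, hx0⟩ := hK
    exact (norm_nonneg (T x0)).trans (key ⟨x0, hx0⟩)
  have hTT : berNorm K (adjoint T * T) ≤ R ^ 2 := by
    refine ciSup_le fun x => ciSup_le fun y => ?_
    have hinner : ⟪(y : H), (adjoint T * T) (x : H)⟫_ℂ = ⟪T (y : H), T (x : H)⟫_ℂ := by
      simp [ContinuousLinearMap.mul_apply, ContinuousLinearMap.adjoint_inner_right]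
    calc ‖⟪(y : H), (adjoint T * T) (x : H)⟫_ℂ‖
        ≤ ‖T (y : H)‖ * ‖T (x : H)‖ := by
          rw [hinner]; exact norm_inner_le_norm _ _
      _ ≤ R * R := mul_le_mul (key y) (key x) (norm_nonneg _) hR0
      _ = R ^ 2 := (sq R).symm
  calc Real.sqrt (berNorm K (adjoint T * T)) ≤ Real.sqrt (R ^ 2) := Real.sqrt_le_sqrt hTT
    _ = R := Real.sqrt_sq hR0
end
end

section
/- Let θ ∈ [0, π/2) and let T be a boundedly invertible bounded linear operator on H (with bounded inverse T⁻¹) such that T² is Berezin sectorial with semi-angle θ relative to K. Then (‖T*T‖_ber)^{1/2} ≤ ‖T⁻¹‖ · ( sin(θ)·ber(T²) + (1/2)·‖(T − iT*)*(T − iT*)‖_ber ). -/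
open scoped InnerProductSpace
open ContinuousLinearMap

noncomputable section

variable {H : Type*} [NormedAddCommGroup H] [InnerProductSpace ℂ H] [CompleteSpace H]

section Aux

variable {H : Type*} [NormedAddCommGroup H] [InnerProductSpace ℂ H] [CompleteSpace H]

lemma abs_inner_le_opNorm' (B : H →L[ℂ] H) {x y : H} (hx : ‖x‖ = 1) (hy : ‖y‖ = 1) :
    ‖⟪y, B x⟫_ℂ‖ ≤ ‖B‖ := by
  calc ‖⟪y, B x⟫_ℂ‖ = ‖⟪y, B x⟫_ℂ‖ := rfl
    _ ≤ ‖y‖ * ‖B x‖ := norm_inner_le_norm _ _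
    _ ≤ 1 * (‖B‖ * ‖x‖) := by simpa [hy] using B.le_opNorm x
    _ = ‖B‖ := by rw [hx]; ring

lemma le_berNum' (K : Set H) (hKu : ∀ x ∈ K, ‖x‖ = 1) (B : H →L[ℂ] H) {x : H} (hx : x ∈ K) :
    ‖⟪x, B x⟫_ℂ‖ ≤ berNum K B := by
  have : Nonempty K := ⟨⟨x, hx⟩⟩
  exact le_ciSup (f := fun x : K => ‖⟪(x : H), B x⟫_ℂ‖)
    ⟨‖B‖, by rintro _ ⟨z, rfl⟩; exact abs_inner_le_opNorm' B (hKu z z.2) (hKu z z.2)⟩ ⟨x, hx⟩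

lemma le_berNorm' (K : Set H) (hKu : ∀ x ∈ K, ‖x‖ = 1) (B : H →L[ℂ] H) {x y : H}
    (hx : x ∈ K) (hy : y ∈ K) :
    ‖⟪y, B x⟫_ℂ‖ ≤ berNorm K B := by
  have : Nonempty K := ⟨⟨x, hx⟩⟩
  have h1 : ‖⟪y, B x⟫_ℂ‖ ≤ ⨆ y : K, ‖⟪(y : H), B x⟫_ℂ‖ :=
    le_ciSup (f := fun y : K => ‖⟪(y : H), B x⟫_ℂ‖)
      ⟨‖B‖, by rintro _ ⟨z, rfl⟩; exact abs_inner_le_opNorm' B (hKu x hx) (hKu z z.2)⟩ ⟨y, hy⟩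
  refine h1.trans ?_
  exact le_ciSup (f := fun x : K => ⨆ y : K, ‖⟪(y : H), B (x : H)⟫_ℂ‖)
    ⟨‖B‖, by rintro _ ⟨z, rfl⟩; exact ciSup_le fun w =>
      abs_inner_le_opNorm' B (hKu z z.2) (hKu w w.2)⟩ ⟨x, hx⟩

lemma aux_im_le (θ : ℝ) (z : ℂ) (hcos : 0 < Real.cos θ) (hsin : 0 ≤ Real.sin θ)
    (hre : 0 ≤ z.re) (h1 : Real.cos θ * |z.im| ≤ Real.sin θ * z.re) :
    |z.im| ≤ Real.sin θ * ‖z‖ := by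
  have habs : ‖z‖ ^ 2 = z.re ^ 2 + z.im ^ 2 := by
    rw [Complex.sq_norm, Complex.normSq_apply]; ring
  have habs0 : 0 ≤ ‖z‖ := norm_nonneg z
  have hpyth : Real.sin θ ^ 2 + Real.cos θ ^ 2 = 1 := Real.sin_sq_add_cos_sq θ
  nlinarith [sq_nonneg (Real.sin θ * ‖z‖ - |z.im|), sq_nonneg z.im,
    abs_nonneg z.im, sq_abs z.im,
    mul_le_mul h1 h1 (mul_nonneg hcos.le (abs_nonneg _)) (mul_nonneg hsin hre),
    mul_nonneg hsin habs0]

end Aux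

set_option maxHeartbeats 1000000 in
/-- If `T` is boundedly invertible (with bounded inverse `Tinv`) and `T²`
is Berezin sectorial with semi-angle `θ ∈ [0, π/2)` relative to `K`, then
`(‖T*T‖_ber)^{1/2} ≤ ‖T⁻¹‖ (sin θ · ber(T²) + (1/2) ‖|T − iT*|²‖_ber)`. -/
theorem berezin_sectorial_square_invertible_upper_bound
    (K : Set H) (hK : K.Nonempty) (hKunit : ∀ x ∈ K, ‖x‖ = 1)
    (θ : ℝ) (hθ : θ ∈ Set.Ico 0 (Real.pi / 2))
    (T Tinv : H →L[ℂ] H) (hT1 : T * Tinv = 1) (hT2 : Tinv * T = 1)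
    (hTsq : BerSectorial K θ (T * T)) :
    Real.sqrt (berNorm K (adjoint T * T)) ≤
      ‖Tinv‖ * (Real.sin θ * berNum K (T * T)
        + (1 / 2) * berNorm K (adjoint (T - Complex.I • adjoint T) *
            (T - Complex.I • adjoint T))) := by
  classical
  obtain ⟨hθ0, hθ2⟩ := hθ
  have hpi := Real.pi_pos
  have hcos : 0 < Real.cos θ := Real.cos_pos_of_mem_Ioo ⟨by linarith, hθ2⟩
  have hsin : 0 ≤ Real.sin θ := Real.sin_nonneg_of_nonneg_of_le_pi hθ0 (by linarith)
  obtain ⟨A, hA⟩ : ∃ A : H →L[ℂ] H, A = T - Complex.I • adjoint T := ⟨_, rfl⟩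
  rw [← hA]
  obtain ⟨R, hR⟩ : ∃ R : ℝ,
      R = Real.sin θ * berNum K (T * T) + (1 / 2) * berNorm K (adjoint A * A) := ⟨_, rfl⟩
  rw [← hR]
  have hTinv0 : (0:ℝ) ≤ ‖Tinv‖ := norm_nonneg _
  have hnadj : ‖adjoint Tinv‖ = ‖Tinv‖ := LinearIsometryEquiv.norm_map adjoint Tinv
  have key : ∀ x ∈ K, ‖T x‖ ≤ ‖Tinv‖ * R := by
    intro x hx
    have hx1 : ‖x‖ = 1 := hKunit x hx
    -- 1 ≤ ‖Tinv‖ * ‖T* x‖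
    have hadj : adjoint Tinv ∘L adjoint T = 1 := by
      rw [← adjoint_comp]
      have h : T ∘L Tinv = 1 := hT1
      rw [h]
      rw [ContinuousLinearMap.one_def, adjoint_id]
    have h2 : 1 ≤ ‖Tinv‖ * ‖(adjoint T) x‖ := by
      have hxeq : (adjoint Tinv) ((adjoint T) x) = x := by
        have := congrArg (fun f => f x) hadj
        simpa using this
      calc (1:ℝ) = ‖x‖ := hx1.symm
        _ = ‖(adjoint Tinv) ((adjoint T) x)‖ := by rw [hxeq]
        _ ≤ ‖adjoint Tinv‖ * ‖(adjoint T) x‖ := le_opNorm _ _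
        _ = ‖Tinv‖ * ‖(adjoint T) x‖ := by rw [hnadj]
    -- sectorial bound
    obtain ⟨hre, him⟩ := hTsq x hx
    obtain ⟨z, hzdef⟩ : ∃ z : ℂ, z = ⟪x, (T * T) x⟫_ℂ := ⟨_, rfl⟩
    rw [← hzdef] at hre him
    have hIm : |z.im| ≤ Real.sin θ * ‖z‖ := by
      refine aux_im_le θ z hcos hsin hre ?_
      have h := mul_le_mul_of_nonneg_left him hcos.le
      rw [Real.tan_eq_sin_div_cos] at h
      calc Real.cos θ * |z.im| ≤ Real.cos θ * (Real.sin θ / Real.cos θ * z.re) := h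
        _ = Real.sin θ * z.re := by field_simp
    have hber1 : ‖z‖ ≤ berNum K (T * T) := by
      rw [hzdef]; exact le_berNum' K hKunit _ hx
    -- |A x|² ≤ berNorm
    have hAA : ⟪x, (adjoint A * A) x⟫_ℂ = (‖A x‖ : ℂ) ^ 2 := by
      rw [ContinuousLinearMap.mul_apply, adjoint_inner_right, inner_self_eq_norm_sq_to_K]
      norm_cast
    have hAx : ‖A x‖ ^ 2 ≤ berNorm K (adjoint A * A) := by
      have h := le_berNorm' K hKunit (adjoint A * A) hx hx
      rwa [hAA, norm_pow, Complex.norm_real, norm_norm] at h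
    -- identity
    have hid : ‖T x‖ ^ 2 + ‖(adjoint T) x‖ ^ 2 = ‖A x‖ ^ 2 + 2 * z.im := by
      have hAxeq : A x = T x - Complex.I • ((adjoint T) x) := by
        simp [hA]
      have hinner : ⟪T x, Complex.I • ((adjoint T) x)⟫_ℂ = Complex.I * (starRingEnd ℂ) z := by
        rw [inner_smul_right]
        congr 1
        rw [adjoint_inner_right, ← inner_conj_symm, hzdef, ContinuousLinearMap.mul_apply]
      have hnormI : ‖Complex.I • ((adjoint T) x)‖ = ‖(adjoint T) x‖ := by
        rw [norm_smul]; simp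
      have hns := @norm_sub_sq ℂ H _ _ _ (T x) (Complex.I • ((adjoint T) x))
      rw [hinner, hnormI] at hns
      have hreI : (Complex.I * (starRingEnd ℂ) z).re = z.im := by
        simp [Complex.mul_re]
      rw [hAxeq, hns]
      simp only [RCLike.re_to_complex] at *
      rw [hreI]
      ring
    -- combine
    have hzim : z.im ≤ Real.sin θ * berNum K (T * T) := by
      have h := mul_le_mul_of_nonneg_left hber1 hsin
      have h' := le_abs_self z.im
      linarith [hIm]
    have hsum : ‖T x‖ ^ 2 + ‖(adjoint T) x‖ ^ 2 ≤ 2 * R := by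
      rw [hid, hR]; linarith [hAx, hzim]
    have hTx0 : (0:ℝ) ≤ ‖T x‖ := norm_nonneg _
    have hamgm : 2 * ‖T x‖ * ‖(adjoint T) x‖ ≤ 2 * R := by
      nlinarith [sq_nonneg (‖T x‖ - ‖(adjoint T) x‖)]
    have step1 : 2 * ‖T x‖ ≤ ‖Tinv‖ * (2 * ‖T x‖ * ‖(adjoint T) x‖) := by
      nlinarith [h2, hTx0]
    have step2 : ‖Tinv‖ * (2 * ‖T x‖ * ‖(adjoint T) x‖) ≤ ‖Tinv‖ * (2 * R) :=
      mul_le_mul_of_nonneg_left hamgm hTinv0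
    linarith
  have : Nonempty K := hK.to_subtype
  obtain ⟨x0, hx0⟩ := hK
  have hMR : 0 ≤ ‖Tinv‖ * R := le_trans (norm_nonneg (T x0)) (key x0 hx0)
  have hmain : berNorm K (adjoint T * T) ≤ (‖Tinv‖ * R) ^ 2 := by
    refine ciSup_le fun x => ciSup_le fun y => ?_
    have heq : ⟪(y : H), (adjoint T * T) (x : H)⟫_ℂ = ⟪T (y : H), T (x : H)⟫_ℂ := by
      rw [ContinuousLinearMap.mul_apply, adjoint_inner_right]
    calc ‖⟪(y : H), (adjoint T * T) (x : H)⟫_ℂ‖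
        = ‖⟪T (y : H), T (x : H)⟫_ℂ‖ := by rw [heq]
      _ ≤ ‖T (y : H)‖ * ‖T (x : H)‖ := norm_inner_le_norm _ _
      _ ≤ (‖Tinv‖ * R) * (‖Tinv‖ * R) :=
          mul_le_mul (key y y.2) (key x x.2) (norm_nonneg _) hMR
      _ = (‖Tinv‖ * R) ^ 2 := by ring
  calc Real.sqrt (berNorm K (adjoint T * T)) ≤ Real.sqrt ((‖Tinv‖ * R) ^ 2) :=
        Real.sqrt_le_sqrt hmain
    _ = ‖Tinv‖ * R := by rw [Real.sqrt_sq hMR]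
end
end
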